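/- arXiv:1705.01623 — 2 statements merged into one kernel-verified Lean document; each statement's English description precedes it below -/
import Mathlib

section
/- The first non-linear extension of the Somos-4 sequence is integer: let (a_n)_{n≥1} be the Somos-4 sequence, let w and b_1, b_2, b_3, b_4 be arbitrary integers, and define rational numbers b_n for n ≥ 5 by b_{n+4} = (a_{n+1}·b_{n+3} + 2·a_{n+2}·b_{n+2} + a_{n+3}·b_{n+1} − a_{n+4}·b_n + w·a_{n+2}^2)/a_n. Then b_n is an integer for every n ≥ 1. -/
/-!
Put `A n = a n + b n ε` in `ℚ[ε]`. The two recurrences say exactly that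
`A (n + 4) * A n = A (n + 3) * A (n + 1) + A (n + 2) ^ 2 * β` with `β = 1 + w ε`, a unit of `ℤ[ε]`,
and the first four terms are units of `ℤ[ε]`. The integrality argument for Somos-4 only needs `β`
to be a unit: inductively, any two terms at distance at most three are coprime in `ℤ[ε]`, and an
explicit identity shows that `A (n + 4)` divides
`A (n + 1) ^ 3 * A (n + 2) ^ 2 * A (n + 3) * (A (n + 7) * A (n + 5) + A (n + 6) ^ 2 * β)`.
By coprimality it divides the last factor, which is `A (n + 8) * A (n + 4)`, so `A (n + 8)` lies
in `ℤ[ε]` again.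
-/

open Function TrivSqZeroExt

def Somos4Rel {R : Type*} [CommRing R] (β : R) (x : ℕ → R) (n : ℕ) : Prop :=
  x (n + 4) * x n = x (n + 3) * x (n + 1) + x (n + 2) ^ 2 * β

namespace Somos4Rel

section CommRing

variable {R : Type*} [CommRing R] {β : R} {x : ℕ → R} {n : ℕ}

theorem isCoprime (h : Somos4Rel β x n) (hβ : IsUnit β)
    (h21 : IsCoprime (x (n + 2)) (x (n + 1))) (h32 : IsCoprime (x (n + 3)) (x (n + 2))) :
    IsCoprime (x (n + 4)) (x (n + 1)) ∧ IsCoprime (x (n + 4)) (x (n + 2)) ∧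
      IsCoprime (x (n + 4)) (x (n + 3)) := by
  have hsq {i j : ℕ} (hij : IsCoprime (x i) (x j)) : IsCoprime (x i ^ 2 * β) (x j) :=
    (isCoprime_mul_unit_right_left hβ _ _).mpr hij.pow_left
  refine ⟨.of_mul_left_left (y := x n) ?_, .of_mul_left_left (y := x n) ?_,
    .of_mul_left_left (y := x n) ?_⟩ <;> rw [h]
  · exact (hsq h21).mul_add_right_left _
  · rw [pow_two, mul_assoc]
    exact (h32.mul_left h21.symm).add_mul_left_left _
  · exact (hsq h32.symm).mul_add_left_left _

theorem dvd_mul (h0 : Somos4Rel β x n) (h1 : Somos4Rel β x (n + 1))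
    (h2 : Somos4Rel β x (n + 2)) (h3 : Somos4Rel β x (n + 3)) :
    x (n + 4) ∣ x (n + 1) ^ 3 * x (n + 2) ^ 2 * x (n + 3) *
      (x (n + 7) * x (n + 5) + x (n + 6) ^ 2 * β) := by
  set a := x (n + 4)
  set p := x (n + 1)
  set q := x (n + 2)
  set r := x (n + 3)
  set x₁ := x (n + 5)
  set x₂ := x (n + 6)
  set x₃ := x (n + 7)
  have e₁ : a * x n = r * p + q ^ 2 * β := h0
  have e₂ : x₁ * p = a * q + r ^ 2 * β := h1
  have e₃ : x₂ * q = x₁ * r + a ^ 2 * β := h2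
  have e₄ : x₃ * r = x₂ * a + x₁ ^ 2 * β := h3
  refine ⟨r ^ 6 * β ^ 3 * x n
    + (β * q ^ 2 * ((x₁ * p) ^ 2 + (x₁ * p) * (r ^ 2 * β) + (r ^ 2 * β) ^ 2)
        + r ^ 3 * β * p * (x₁ * p + r ^ 2 * β)) * q
    + β * p ^ 3 * r * (x₂ * q + x₁ * r) * a * β
    + x₁ * p ^ 3 * q ^ 2 * x₂, ?_⟩
  linear_combination (-(r ^ 6 * β ^ 3)) * e₁
    + (β * q ^ 2 * ((x₁ * p) ^ 2 + (x₁ * p) * (r ^ 2 * β) + (r ^ 2 * β) ^ 2)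
        + r ^ 3 * β * p * (x₁ * p + r ^ 2 * β)) * e₂
    + β * p ^ 3 * r * (x₂ * q + x₁ * r) * e₃
    + x₁ * p ^ 3 * q ^ 2 * e₄

theorem dvd (h0 : Somos4Rel β x n) (h1 : Somos4Rel β x (n + 1))
    (h2 : Somos4Rel β x (n + 2)) (h3 : Somos4Rel β x (n + 3))
    (hc1 : IsCoprime (x (n + 4)) (x (n + 1))) (hc2 : IsCoprime (x (n + 4)) (x (n + 2)))
    (hc3 : IsCoprime (x (n + 4)) (x (n + 3))) :
    x (n + 4) ∣ x (n + 7) * x (n + 5) + x (n + 6) ^ 2 * β :=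
  ((hc1.pow_right.mul_right hc2.pow_right).mul_right hc3).dvd_of_dvd_mul_left
    (dvd_mul h0 h1 h2 h3)

end CommRing

section Lift

variable {R S : Type*} [CommRing R] [CommRing S] (f : R →+* S) {β : R} {x : ℕ → S} {y : ℕ → R}
  {n : ℕ}

theorem of_map (hf : Injective f) (hx : Somos4Rel (f β) x n)
    (hy : ∀ k ≤ n + 4, f (y k) = x k) : Somos4Rel β y n := by
  apply hf
  simp only [map_add, map_mul, map_pow]
  rwa [hy n (by omega), hy (n + 1) (by omega), hy (n + 2) (by omega), hy (n + 3) (by omega),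
    hy (n + 4) le_rfl]

theorem mem_range_of_dvd (hx : Somos4Rel (f β) x n) (hreg : x n ∈ nonZeroDivisors S)
    (hy : ∀ k < n + 4, f (y k) = x k)
    (hd : y n ∣ y (n + 3) * y (n + 1) + y (n + 2) ^ 2 * β) :
    x (n + 4) ∈ Set.range f := by
  obtain ⟨c, hc⟩ := hd
  refine ⟨c, (mul_cancel_right_mem_nonZeroDivisors hreg).mp ?_⟩
  calc f c * x n = f (y n * c) := by rw [map_mul, hy n (by omega), mul_comm]
    _ = f (y (n + 3) * y (n + 1) + y (n + 2) ^ 2 * β) := by rw [hc]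
    _ = x (n + 4) * x n := by
      rw [hx, map_add, map_mul, map_mul, map_pow, hy (n + 1) (by omega),
        hy (n + 2) (by omega), hy (n + 3) (by omega)]

theorem mem_range_of_isCoprime (hf : Injective f) (hx : ∀ j, Somos4Rel (f β) x j)
    (hreg : x (n + 4) ∈ nonZeroDivisors S) (hy : ∀ k < n + 8, f (y k) = x k)
    (hc1 : IsCoprime (y (n + 4)) (y (n + 1))) (hc2 : IsCoprime (y (n + 4)) (y (n + 2)))
    (hc3 : IsCoprime (y (n + 4)) (y (n + 3))) :
    x (n + 8) ∈ Set.range f := by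
  have hrel {j : ℕ} (hj : j ≤ n + 3) : Somos4Rel β y j :=
    of_map f hf (hx j) fun k hk => hy k (by omega)
  exact mem_range_of_dvd f (hx (n + 4)) hreg hy
    (dvd (hrel (by omega)) (hrel (by omega)) (hrel (by omega)) (hrel le_rfl) hc1 hc2 hc3)

theorem forall_mem_range (hf : Injective f) (hβ : IsUnit β) (hx : ∀ n, Somos4Rel (f β) x n)
    (hreg : ∀ n, x n ∈ nonZeroDivisors S) (hinit : ∀ i < 4, ∃ u, IsUnit u ∧ f u = x i) (n : ℕ) :
    x n ∈ Set.range f := by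
  set y := invFun f ∘ x
  have hy {k : ℕ} (hk : x k ∈ Set.range f) : f (y k) = x k := invFun_eq hk
  have hunit {k : ℕ} (hk : k < 4) : IsUnit (y k) := by
    obtain ⟨u, hu, hux⟩ := hinit k hk
    rwa [show y k = u from hf ((hy ⟨u, hux⟩).trans hux.symm)]
  suffices H : ∀ k, x k ∈ Set.range f ∧ ∀ i < k, k ≤ i + 3 → IsCoprime (y k) (y i) from (H n).1
  intro k
  induction k using Nat.strong_induction_on with
  | _ k ih =>
  rcases lt_or_ge k 4 with hk | hk
  · obtain ⟨u, -, hux⟩ := hinit k hk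
    exact ⟨⟨u, hux⟩, fun i _ _ => ⟨↑(hunit hk).unit⁻¹, 0, by simp⟩⟩
  obtain ⟨n, rfl⟩ := Nat.exists_eq_add_of_le' hk
  have hylt {m : ℕ} (hm : m < n + 4) : f (y m) = x m := hy (ih m hm).1
  have hcop {i j : ℕ} (hij : i < j) (hj : j < n + 4) (hji : j ≤ i + 3) : IsCoprime (y j) (y i) :=
    (ih j hj).2 i hij hji
  have hmem : x (n + 4) ∈ Set.range f := by
    rcases lt_or_ge n 4 with hn | hn
    · exact mem_range_of_dvd f (hx n) (hreg n) (fun m hm => hylt hm) (hunit hn).dvd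
    · obtain ⟨m, rfl⟩ := Nat.exists_eq_add_of_le' hn
      exact mem_range_of_isCoprime f hf hx (hreg _) (fun k hk => hylt hk)
        (hcop (by omega) (by omega) (by omega)) (hcop (by omega) (by omega) (by omega))
        (hcop (by omega) (by omega) (by omega))
  have hyle {m : ℕ} (hm : m ≤ n + 4) : f (y m) = x m := by
    rcases hm.lt_or_eq with hm | rfl
    exacts [hylt hm, hy hmem]
  obtain ⟨c1, c2, c3⟩ := (of_map f hf (hx n) fun m hm => hyle hm).isCoprime hβ
    (hcop (by omega) (by omega) (by omega)) (hcop (by omega) (by omega) (by omega))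
  refine ⟨hmem, fun i hi hi' => ?_⟩
  obtain rfl | rfl | rfl : i = n + 1 ∨ i = n + 2 ∨ i = n + 3 := by omega
  exacts [c1, c2, c3]

end Lift

end Somos4Rel

namespace DualNumber

variable {R S : Type*} [CommRing R] [CommRing S]

def mapRingHom (φ : R →+* S) : DualNumber R →+* DualNumber S where
  toFun z := inl (φ z.fst) + inr (φ z.snd)
  map_one' := by ext <;> simp
  map_mul' z z' := by ext <;> simp
  map_zero' := by ext <;> simp
  map_add' z z' := by ext <;> simp

@[simp]
theorem fst_mapRingHom (φ : R →+* S) (z : DualNumber R) : (mapRingHom φ z).fst = φ z.fst := by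
  simp [mapRingHom]

@[simp]
theorem snd_mapRingHom (φ : R →+* S) (z : DualNumber R) : (mapRingHom φ z).snd = φ z.snd := by
  simp [mapRingHom]

theorem mapRingHom_injective {φ : R →+* S} (hφ : Injective φ) : Injective (mapRingHom φ) :=
  fun z z' h => TrivSqZeroExt.ext (hφ (by simpa using congr_arg fst h))
    (hφ (by simpa using congr_arg snd h))

end DualNumber

theorem somos4Rel_dualNumber {K : Type*} [Field K] {a b : ℕ → K} {w : K} {n : ℕ} (ha : a n ≠ 0)
    (hra : a (n + 4) = (a (n + 3) * a (n + 1) + a (n + 2) ^ 2) / a n)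
    (hrb : b (n + 4) = (a (n + 1) * b (n + 3) + 2 * a (n + 2) * b (n + 2)
      + a (n + 3) * b (n + 1) - a (n + 4) * b n + w * a (n + 2) ^ 2) / a n) :
    Somos4Rel (1 + inr w) (fun k => inl (a k) + inr (b k) : ℕ → DualNumber K) n := by
  rw [eq_div_iff ha] at hra hrb
  ext
  · simp only [fst_mul, fst_add, fst_inl, fst_inr, fst_pow, fst_one]
    linear_combination hra
  · simp only [pow_two, snd_mul, snd_add, snd_inl, snd_inr, snd_one, fst_mul, fst_add, fst_inl,
      fst_inr, fst_one, smul_eq_mul, op_smul_eq_smul]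
    linear_combination hrb

theorem somos4_pos {K : Type*} [Field K] [LinearOrder K] [IsStrictOrderedRing K] {a : ℕ → K}
    (hinit : ∀ i < 4, 0 < a i)
    (hrec : ∀ n, a (n + 4) = (a (n + 3) * a (n + 1) + a (n + 2) ^ 2) / a n) (n : ℕ) : 0 < a n := by
  induction n using Nat.strong_induction_on with
  | _ n ih =>
  rcases lt_or_ge n 4 with hn | hn
  · exact hinit n hn
  · obtain ⟨m, rfl⟩ := Nat.exists_eq_add_of_le' hn
    have h0 := ih m (by omega)
    have h1 := ih (m + 1) (by omega)
    have h2 := ih (m + 2) (by omega)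
    have h3 := ih (m + 3) (by omega)
    rw [hrec]
    positivity

/-- The first non-linear extension of the Somos-4 sequence is integer. -/
theorem somos4_nonlinear_extension_one_integer (a : ℕ → ℚ)
    (h1 : a 1 = 1) (h2 : a 2 = 1) (h3 : a 3 = 1) (h4 : a 4 = 1)
    (hrec : ∀ n, 1 ≤ n →
      a (n + 4) = (a (n + 3) * a (n + 1) + a (n + 2) ^ 2) / a n)
    (w : ℤ) (b : ℕ → ℚ) (b1 b2 b3 b4 : ℤ)
    (hb1 : b 1 = (b1 : ℚ)) (hb2 : b 2 = (b2 : ℚ)) (hb3 : b 3 = (b3 : ℚ)) (hb4 : b 4 = (b4 : ℚ))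
    (hbrec : ∀ n, 1 ≤ n →
      b (n + 4) = (a (n + 1) * b (n + 3) + 2 * a (n + 2) * b (n + 2)
        + a (n + 3) * b (n + 1) - a (n + 4) * b n + (w : ℚ) * a (n + 2) ^ 2) / a n) :
    ∀ n, 1 ≤ n → ∃ k : ℤ, b n = (k : ℚ) := by
  have hpos : ∀ n, 0 < a (n + 1) := somos4_pos
    (fun i hi => by interval_cases i <;> simp [h1, h2, h3, h4]) (fun n => hrec (n + 1) le_add_self)
  let f := DualNumber.mapRingHom (Int.castRingHom ℚ)
  have hX (n : ℕ) : Somos4Rel (f (1 + inr w)) (fun k => inl (a (k + 1)) + inr (b (k + 1))) n := by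
    have hβ : f (1 + inr w) = 1 + inr (w : ℚ) := by ext <;> simp [f]
    rw [hβ]
    exact somos4Rel_dualNumber (a := fun k => a (k + 1)) (b := fun k => b (k + 1)) (hpos n).ne'
      (hrec (n + 1) le_add_self) (hbrec (n + 1) le_add_self)
  have hinit : ∀ i < 4, ∃ u, IsUnit u ∧ f u = inl (a (i + 1)) + inr (b (i + 1)) := by
    intro i hi
    obtain ⟨c, ha, hb⟩ : ∃ c : ℤ, a (i + 1) = 1 ∧ b (i + 1) = c := by
      interval_cases i
      exacts [⟨b1, h1, hb1⟩, ⟨b2, h2, hb2⟩, ⟨b3, h3, hb3⟩, ⟨b4, h4, hb4⟩]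
    exact ⟨1 + inr c, by simp [isUnit_iff_isUnit_fst], by ext <;> simp [f, ha, hb]⟩
  intro n hn
  obtain ⟨m, rfl⟩ : ∃ m, n = m + 1 := ⟨n - 1, by omega⟩
  obtain ⟨z, hz⟩ := Somos4Rel.forall_mem_range f
    (DualNumber.mapRingHom_injective Int.cast_injective) (by simp [isUnit_iff_isUnit_fst])
    hX (fun k => (isUnit_iff_isUnit_fst.mpr (by simpa using (hpos k).ne')).mem_nonZeroDivisors)
    hinit m
  exact ⟨z.snd, by simpa [f] using congr_arg snd hz.symm⟩
end

section
/- The second non-linear extension of the Somos-4 sequence is integer: let (a_n)_{n≥1} be the Somos-4 sequence, let w and b_1, b_2, b_3, b_4 be arbitrary integers, and define rational numbers b_n for n ≥ 5 by b_{n+4} = (a_{n+1}·b_{n+3} + 2·a_{n+2}·b_{n+2} + a_{n+3}·b_{n+1} − a_{n+4}·b_n + w·a_{n+3}·a_{n+1})/a_n. Then b_n is an integer for every n ≥ 1. -/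
/-!
In the dual numbers, `A n = a n + b n ε` satisfies the Somos-4 recurrence
`A (n+4) * A n = α * A (n+3) * A (n+1) + β * A (n+2) ^ 2` with `α = 1 + w ε` and `β = 1`,
both units of `ℤ[ε]`. The Laurent phenomenon for Somos-4 works over any commutative ring `R`
with unit coefficients: reducing three consecutive relations modulo `x₄` and using the fourth
gives `x₄ ∣ x₁ x₂² x₃ (α x₇ x₅ + β x₆²)`, so `x₄ ∣ α x₇ x₅ + β x₆²` as soon as `x₁, x₂, x₃` are
coprime to `x₄`, and then `x₈ = (α x₇ x₅ + β x₆²) / x₄` lies in `R`. The recurrence keeps any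
four consecutive terms pairwise coprime, so induction shows that every term lies in `R`; with
`R = ℤ[ε] ⊆ ℚ[ε]` this is the integrality of `a n` and `b n`.
-/

open Function DualNumber TrivSqZeroExt

section Somos4

variable {R : Type*} [CommRing R] {α β x₀ x₁ x₂ x₃ x₄ x₅ x₆ x₇ : R}

theorem somos4_dvd_mul (h₀ : x₄ * x₀ = α * x₃ * x₁ + β * x₂ ^ 2)
    (h₁ : x₅ * x₁ = α * x₄ * x₂ + β * x₃ ^ 2) (h₂ : x₆ * x₂ = α * x₅ * x₃ + β * x₄ ^ 2)
    (h₃ : x₇ * x₃ = α * x₆ * x₄ + β * x₅ ^ 2) :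
    x₄ ∣ x₁ * x₂ ^ 2 * x₃ * (α * x₇ * x₅ + β * x₆ ^ 2) :=
  ⟨α ^ 2 * x₁ * x₂ ^ 2 * x₅ * x₆ + β ^ 2 * x₁ * x₃ * x₄ * (x₆ * x₂ + α * x₅ * x₃)
      + α ^ 2 * β * x₂ ^ 3 * x₅ ^ 2 + α * β * x₀ * x₃ ^ 2 * x₅ ^ 2, by
    linear_combination (α * x₁ * x₂ ^ 2 * x₅) * h₃ + (β * x₁ * x₃ * (x₆ * x₂ + α * x₅ * x₃)) * h₂
      + (α * β * x₂ ^ 2 * x₅ ^ 2) * h₁ - (α * β * x₃ ^ 2 * x₅ ^ 2) * h₀⟩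

theorem somos4_dvd_of_isCoprime (h₀ : x₄ * x₀ = α * x₃ * x₁ + β * x₂ ^ 2)
    (h₁ : x₅ * x₁ = α * x₄ * x₂ + β * x₃ ^ 2) (h₂ : x₆ * x₂ = α * x₅ * x₃ + β * x₄ ^ 2)
    (h₃ : x₇ * x₃ = α * x₆ * x₄ + β * x₅ ^ 2)
    (c₁ : IsCoprime x₁ x₄) (c₂ : IsCoprime x₂ x₄) (c₃ : IsCoprime x₃ x₄) :
    x₄ ∣ α * x₇ * x₅ + β * x₆ ^ 2 :=
  ((c₁.mul_left c₂.pow_left).mul_left c₃).symm.dvd_of_dvd_mul_left (somos4_dvd_mul h₀ h₁ h₂ h₃)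

theorem somos4_isCoprime (hα : IsUnit α) (hβ : IsUnit β)
    (h : x₄ * x₀ = α * x₃ * x₁ + β * x₂ ^ 2)
    (c₁₂ : IsCoprime x₁ x₂) (c₂₃ : IsCoprime x₂ x₃) :
    IsCoprime x₁ x₄ ∧ IsCoprime x₂ x₄ ∧ IsCoprime x₃ x₄ := by
  refine ⟨.of_mul_right_left (z := x₀) ?_, .of_mul_right_left (z := x₀) ?_,
    .of_mul_right_left (z := x₀) ?_⟩
  · rw [show x₄ * x₀ = β * x₂ ^ 2 + x₁ * (α * x₃) by rw [h]; ring]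
    exact ((isCoprime_mul_unit_left_right hβ _ _).mpr c₁₂.pow_right).add_mul_left_right _
  · rw [show x₄ * x₀ = α * (x₃ * x₁) + x₂ * (β * x₂) by rw [h]; ring]
    exact ((isCoprime_mul_unit_left_right hα _ _).mpr (c₂₃.mul_right c₁₂.symm)).add_mul_left_right _
  · rw [show x₄ * x₀ = β * x₂ ^ 2 + x₃ * (α * x₁) by rw [h]; ring]
    exact ((isCoprime_mul_unit_left_right hβ _ _).mpr c₂₃.symm.pow_right).add_mul_left_right _

variable {S : Type*} [CommRing S] {ι : R →+* S} {X : ℕ → S}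

-- `invFun ι (X k)` is the preimage of `X k` in `R`, meaningful only once `X k ∈ Set.range ι`.
variable (ι X) in
def Somos4Stage (n : ℕ) : Prop :=
  (∀ k ≤ n + 3, X k ∈ Set.range ι) ∧
    ∀ i j, n ≤ i → i < j → j ≤ n + 3 → IsCoprime (invFun ι (X i)) (invFun ι (X j))

theorem somos4_rec_invFun (hι : Injective ι)
    (hrec : ∀ n, X (n + 4) * X n = ι α * X (n + 3) * X (n + 1) + ι β * X (n + 2) ^ 2) {n : ℕ}
    (h : ∀ k ≤ n + 4, X k ∈ Set.range ι) :
    invFun ι (X (n + 4)) * invFun ι (X n) =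
      α * invFun ι (X (n + 3)) * invFun ι (X (n + 1)) + β * invFun ι (X (n + 2)) ^ 2 := by
  have hy (k : ℕ) (hk : k ≤ n + 4) : ι (invFun ι (X k)) = X k := invFun_eq (h k hk)
  apply hι
  simp (disch := omega) only [map_add, map_mul, map_pow, hy]
  exact hrec n

theorem somos4_mem_range_of_dvd (hX : ∀ n, X n ∈ nonZeroDivisors S)
    (hrec : ∀ n, X (n + 4) * X n = ι α * X (n + 3) * X (n + 1) + ι β * X (n + 2) ^ 2) {n : ℕ}
    (h : ∀ k ≤ n + 3, X k ∈ Set.range ι)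
    (hdvd : invFun ι (X n) ∣
      α * invFun ι (X (n + 3)) * invFun ι (X (n + 1)) + β * invFun ι (X (n + 2)) ^ 2) :
    X (n + 4) ∈ Set.range ι := by
  obtain ⟨q, hq⟩ := hdvd
  refine ⟨q, (mul_cancel_right_mem_nonZeroDivisors (hX n)).mp ?_⟩
  have hy (k : ℕ) (hk : k ≤ n + 3) : ι (invFun ι (X k)) = X k := invFun_eq (h k hk)
  have := congrArg ι hq
  simp (disch := omega) only [map_add, map_mul, map_pow, hy] at this
  rw [hrec n, this, mul_comm]

theorem somos4Stage_succ (hι : Injective ι) (hα : IsUnit α) (hβ : IsUnit β)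
    (hX : ∀ n, X n ∈ nonZeroDivisors S)
    (hrec : ∀ n, X (n + 4) * X n = ι α * X (n + 3) * X (n + 1) + ι β * X (n + 2) ^ 2) {n : ℕ}
    (hn : Somos4Stage ι X n)
    (hdvd : invFun ι (X n) ∣
      α * invFun ι (X (n + 3)) * invFun ι (X (n + 1)) + β * invFun ι (X (n + 2)) ^ 2) :
    Somos4Stage ι X (n + 1) := by
  obtain ⟨hmem, hcop⟩ := hn
  have hmem' : ∀ k ≤ n + 4, X k ∈ Set.range ι := fun k hk =>
    (Nat.le_succ_iff.mp hk).elim (hmem k) fun h => h ▸ somos4_mem_range_of_dvd hX hrec hmem hdvd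
  have hcop' := somos4_isCoprime hα hβ (somos4_rec_invFun hι hrec hmem')
    (hcop _ _ (by omega) (by omega) (by omega)) (hcop _ _ (by omega) (by omega) (by omega))
  refine ⟨hmem', fun i j hi hij hj => ?_⟩
  obtain hj' | rfl : j ≤ n + 3 ∨ j = n + 4 := by omega
  · exact hcop i j (by omega) hij hj'
  · obtain rfl | rfl | rfl : i = n + 1 ∨ i = n + 2 ∨ i = n + 3 := by omega
    exacts [hcop'.1, hcop'.2.1, hcop'.2.2]

theorem somos4Stage_dvd (hι : Injective ι)
    (hrec : ∀ n, X (n + 4) * X n = ι α * X (n + 3) * X (n + 1) + ι β * X (n + 2) ^ 2) {j : ℕ}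
    (h₁ : Somos4Stage ι X (j + 1)) (h₄ : Somos4Stage ι X (j + 4)) :
    invFun ι (X (j + 4)) ∣
      α * invFun ι (X (j + 7)) * invFun ι (X (j + 5)) + β * invFun ι (X (j + 6)) ^ 2 := by
  have hrel (i : ℕ) (hi : i ≤ 3) :=
    somos4_rec_invFun hι hrec (n := j + i) fun k hk => h₄.1 k (by omega)
  have hcop (i : ℕ) (hi : i ≤ 3) (hi' : 1 ≤ i) := h₁.2 (j + i) (j + 4) (by omega) (by omega) le_rfl
  exact somos4_dvd_of_isCoprime (hrel 0 (by omega)) (hrel 1 (by omega)) (hrel 2 (by omega))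
    (hrel 3 (by omega)) (hcop 1 (by omega) le_rfl) (hcop 2 (by omega) (by omega))
    (hcop 3 le_rfl (by omega))

theorem somos4_mem_range (hι : Injective ι) (hα : IsUnit α) (hβ : IsUnit β)
    (hX : ∀ n, X n ∈ nonZeroDivisors S)
    (hrec : ∀ n, X (n + 4) * X n = ι α * X (n + 3) * X (n + 1) + ι β * X (n + 2) ^ 2)
    (hinit : ∀ i < 4, ∃ u, IsUnit u ∧ ι u = X i) (n : ℕ) : X n ∈ Set.range ι := by
  have hunit (i : ℕ) (hi : i < 4) : IsUnit (invFun ι (X i)) := by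
    obtain ⟨u, hu, hXi⟩ := hinit i hi
    rwa [← hXi, leftInverse_invFun hι u]
  have hstage (n : ℕ) : Somos4Stage ι X n := by
    induction n using Nat.strong_induction_on with
    | _ n ih =>
      rcases n with _ | n
      · exact ⟨fun k hk => (hinit k (by omega)).elim fun u hu => ⟨u, hu.2⟩,
          fun i j _ _ _ => isCoprime_one_left.of_isCoprime_of_dvd_left (hunit i (by omega)).dvd⟩
      refine somos4Stage_succ hι hα hβ hX hrec (ih n (by omega)) ?_
      rcases Nat.lt_or_ge n 4 with hn | hn
      · exact (hunit n hn).dvd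
      · obtain ⟨j, rfl⟩ := Nat.exists_eq_add_of_le' hn
        exact somos4Stage_dvd hι hrec (ih (j + 1) (by omega)) (ih (j + 4) (by omega))
  exact (hstage n).1 n (by omega)

end Somos4

noncomputable def intDualCast : ℤ[ε] →+* ℚ[ε] :=
  (DualNumber.lift ⟨(Algebra.ofId ℤ ℚ[ε], ε), eps_mul_eps, fun _ => Commute.all _ _⟩).toRingHom

@[simp] theorem fst_intDualCast (x : ℤ[ε]) : (intDualCast x).fst = x.fst := by
  simp [intDualCast, lift_apply_apply]

@[simp] theorem snd_intDualCast (x : ℤ[ε]) : (intDualCast x).snd = x.snd := by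
  simp [intDualCast, lift_apply_apply]

theorem intDualCast_injective : Injective intDualCast := fun x y h => by
  have := TrivSqZeroExt.ext_iff.mp h
  simp only [fst_intDualCast, snd_intDualCast, Int.cast_inj] at this
  exact TrivSqZeroExt.ext this.1 this.2

theorem somos4_pos_s5 {a : ℕ → ℚ} (h₁ : 0 < a 1) (h₂ : 0 < a 2) (h₃ : 0 < a 3) (h₄ : 0 < a 4)
    (hrec : ∀ n, 1 ≤ n → a (n + 4) = (a (n + 3) * a (n + 1) + a (n + 2) ^ 2) / a n) {n : ℕ}
    (hn : 1 ≤ n) : 0 < a n := by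
  have h (m : ℕ) : 0 < a (m + 1) ∧ 0 < a (m + 2) ∧ 0 < a (m + 3) ∧ 0 < a (m + 4) := by
    induction m with
    | zero => exact ⟨h₁, h₂, h₃, h₄⟩
    | succ m ih =>
      obtain ⟨p₁, p₂, p₃, p₄⟩ := ih
      refine ⟨p₂, p₃, p₄, ?_⟩
      rw [hrec (m + 1) (by omega)]
      exact div_pos (add_pos (mul_pos p₄ p₂) (pow_pos p₃ 2)) p₁
  obtain ⟨m, rfl⟩ : ∃ m, n = m + 1 := ⟨n - 1, by omega⟩
  exact (h m).1

def dualSeq {K : Type*} [Semiring K] (a b : ℕ → K) (n : ℕ) : K[ε] := inl (a n) + inr (b n)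

theorem dualSeq_rec {a b : ℕ → ℚ} {w : ℚ} {n : ℕ} (ha : a n ≠ 0)
    (hrec : a (n + 4) = (a (n + 3) * a (n + 1) + a (n + 2) ^ 2) / a n)
    (hbrec : b (n + 4) = (a (n + 1) * b (n + 3) + 2 * a (n + 2) * b (n + 2)
        + a (n + 3) * b (n + 1) - a (n + 4) * b n + w * a (n + 3) * a (n + 1)) / a n) :
    dualSeq a b (n + 4) * dualSeq a b n =
      (1 + w • ε) * dualSeq a b (n + 3) * dualSeq a b (n + 1) + dualSeq a b (n + 2) ^ 2 := by
  have ha₄ : a (n + 4) * a n = a (n + 3) * a (n + 1) + a (n + 2) ^ 2 := by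
    rw [hrec]; field_simp
  have hb₄ : b (n + 4) * a n = a (n + 1) * b (n + 3) + 2 * a (n + 2) * b (n + 2)
      + a (n + 3) * b (n + 1) - a (n + 4) * b n + w * a (n + 3) * a (n + 1) := by
    rw [hbrec]; field_simp
  ext
  · simp only [dualSeq, inr_eq_smul_eps, fst_mul, fst_add, fst_inl, fst_smul, fst_eps, smul_eq_mul,
      mul_zero, add_zero, sq, fst_one, one_mul]
    linear_combination ha₄
  · simp only [dualSeq, inr_eq_smul_eps, DualNumber.snd_mul, fst_add, fst_inl, fst_smul, fst_eps,
      smul_eq_mul, mul_zero, add_zero, snd_add, snd_inl, snd_smul, snd_eps, mul_one, zero_add, sq,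
      fst_mul, fst_one, one_mul, snd_one]
    linear_combination hb₄

/-- The second non-linear extension of the Somos-4 sequence is integer. -/
theorem somos4_nonlinear_extension_two_integer (a : ℕ → ℚ)
    (h1 : a 1 = 1) (h2 : a 2 = 1) (h3 : a 3 = 1) (h4 : a 4 = 1)
    (hrec : ∀ n, 1 ≤ n →
      a (n + 4) = (a (n + 3) * a (n + 1) + a (n + 2) ^ 2) / a n)
    (w : ℤ) (b : ℕ → ℚ) (b1 b2 b3 b4 : ℤ)
    (hb1 : b 1 = (b1 : ℚ)) (hb2 : b 2 = (b2 : ℚ)) (hb3 : b 3 = (b3 : ℚ)) (hb4 : b 4 = (b4 : ℚ))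
    (hbrec : ∀ n, 1 ≤ n →
      b (n + 4) = (a (n + 1) * b (n + 3) + 2 * a (n + 2) * b (n + 2)
        + a (n + 3) * b (n + 1) - a (n + 4) * b n + (w : ℚ) * a (n + 3) * a (n + 1)) / a n) :
    ∀ n, 1 ≤ n → ∃ k : ℤ, b n = (k : ℚ) := by
  have ha (n : ℕ) : 0 < a (n + 1) := somos4_pos_s5 (by rw [h1]; norm_num) (by rw [h2]; norm_num)
    (by rw [h3]; norm_num) (by rw [h4]; norm_num) hrec (by omega)
  have hinit {i : ℕ} {c : ℤ} (hai : a i = 1) (hbi : b i = c) :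
      ∃ u, IsUnit u ∧ intDualCast u = dualSeq a b i :=
    ⟨1 + inr c, isUnit_iff_isUnit_fst.mpr (by simp), by ext <;> simp [dualSeq, hai, hbi]⟩
  have hcoeff : intDualCast (1 + w • ε) = 1 + (w : ℚ) • ε := by ext <;> simp
  have hmem := somos4_mem_range (α := 1 + w • ε) intDualCast_injective
    (isUnit_iff_isUnit_fst.mpr (by simp)) isUnit_one (X := fun n => dualSeq a b (n + 1))
    (fun n => (isUnit_iff_isUnit_fst.mpr (by simp [dualSeq, (ha n).ne'])).mem_nonZeroDivisors)
    (fun n => by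
      rw [hcoeff, map_one, one_mul]
      exact dualSeq_rec (ha n).ne' (hrec (n + 1) (by omega)) (hbrec (n + 1) (by omega)))
    (fun i hi => by
      interval_cases i
      exacts [hinit h1 hb1, hinit h2 hb2, hinit h3 hb3, hinit h4 hb4])
  intro n hn
  obtain ⟨z, hz⟩ := hmem (n - 1)
  refine ⟨z.snd, ?_⟩
  simpa [dualSeq, Nat.sub_add_cancel hn] using (congrArg TrivSqZeroExt.snd hz).symm
end
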